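/- The equation 2a^2 + 20ab + 10b^2 = 1 has no rational solutions (a,b). -/
import Mathlib

lemma conic_descent : ∀ k : ℕ, ∀ m : ℤ, m.natAbs = k → ∀ p r : ℤ,
    2 * p ^ 2 + 20 * p * r + 10 * r ^ 2 = m ^ 2 → m = 0 := by
  intro k
  induction k using Nat.strong_induction_on with
  | _ k ih =>
    intro m hk p r h
    by_contra hm0
    have key : ∀ x y z : ZMod 5, 2 * x ^ 2 + 20 * x * y + 10 * y ^ 2 = z ^ 2 → x = 0 ∧ z = 0 := by
      decide
    have h5 := key (p : ZMod 5) (r : ZMod 5) (m : ZMod 5)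
      (by exact_mod_cast congrArg (Int.cast : ℤ → ZMod 5) h)
    obtain ⟨p', hp⟩ := (ZMod.intCast_zmod_eq_zero_iff_dvd p 5).mp h5.1
    obtain ⟨m', hm⟩ := (ZMod.intCast_zmod_eq_zero_iff_dvd m 5).mp h5.2
    subst hp hm
    have h2 : 10 * p' ^ 2 + 20 * p' * r + 2 * r ^ 2 = 5 * m' ^ 2 := by
      have h' : 5 * (10 * p' ^ 2 + 20 * p' * r + 2 * r ^ 2) = 5 * (5 * m' ^ 2) := by
        push_cast at h; linear_combination h
      exact mul_left_cancel₀ (by norm_num) h'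
    have key2 : ∀ x y z : ZMod 5, 10 * x ^ 2 + 20 * x * y + 2 * y ^ 2 = 5 * z ^ 2 → y = 0 := by
      decide
    have h5r := key2 (p' : ZMod 5) (r : ZMod 5) (m' : ZMod 5)
      (by exact_mod_cast congrArg (Int.cast : ℤ → ZMod 5) h2)
    obtain ⟨r', hr⟩ := (ZMod.intCast_zmod_eq_zero_iff_dvd r 5).mp h5r
    subst hr
    have h3 : 2 * p' ^ 2 + 20 * p' * r' + 10 * r' ^ 2 = m' ^ 2 := by
      have h' : 25 * (2 * p' ^ 2 + 20 * p' * r' + 10 * r' ^ 2) = 25 * (m' ^ 2) := by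
        push_cast at h; linear_combination h
      exact mul_left_cancel₀ (by norm_num) h'
    have hlt : m'.natAbs < k := by
      subst hk
      have : m' ≠ 0 := by rintro rfl; simp at hm0
      simp only [Int.natAbs_mul, Int.natAbs_natCast]
      omega
    have := ih m'.natAbs hlt m' rfl p' r' h3
    subst this
    simp at hm0

/-- The equation `2a² + 20ab + 10b² = 1` has no rational solutions. -/
theorem no_rational_solutions_conic_bundle :
    ∀ a b : ℚ, 2 * a ^ 2 + 20 * a * b + 10 * b ^ 2 ≠ 1 := by
  intro a b h
  have hda : ((a.den : ℚ)) ≠ 0 := by exact_mod_cast a.den_ne_zero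
  have hdb : ((b.den : ℚ)) ≠ 0 := by exact_mod_cast b.den_ne_zero
  have hA : (a.num : ℚ) = a * a.den := by
    exact (div_eq_iff hda).mp (Rat.num_div_den a)
  have hB : (b.num : ℚ) = b * b.den := by
    exact (div_eq_iff hdb).mp (Rat.num_div_den b)
  have heq : 2 * (a.num * b.den) ^ 2 + 20 * (a.num * b.den) * (b.num * a.den)
      + 10 * (b.num * a.den) ^ 2 = ((a.den : ℤ) * b.den) ^ 2 := by
    have : (2 * ((a.num : ℚ) * b.den) ^ 2 + 20 * ((a.num : ℚ) * b.den) * ((b.num : ℚ) * a.den)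
        + 10 * ((b.num : ℚ) * a.den) ^ 2) = (((a.den : ℚ)) * b.den) ^ 2 := by
      rw [hA, hB]
      linear_combination ((a.den : ℚ) * b.den) ^ 2 * h
    exact_mod_cast this
  have := conic_descent ((a.den : ℤ) * b.den).natAbs _ rfl _ _ heq
  rw [mul_eq_zero] at this
  rcases this with h' | h' <;> simp_all
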